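/- arXiv:2311.11369 — 2 statements merged into one kernel-verified Lean document; each statement's English description precedes it below -/
import Mathlib

section
/- Let π_i = {A^j_{(i)} : j = 1,…,2^i} be the partition of [0,1]^d generated by the max-edge partition rule with depth i. Then every cell A^j_{(i)} is an axis-parallel rectangle each of whose side lengths lies in [2^{−⌈i/d⌉}, 2^{−⌊i/d⌋}], and consequently 2^{−1}√d·2^{−i/d} ≤ diam(A^j_{(i)}) ≤ 2√d·2^{−i/d}, where diam(A) = sup_{x,x'∈A}‖x − x'‖₂. -/
open Real

abbrev Cell (d : ℕ) := Fin d → ℝ × ℝ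

/-- A max-edge binary tree of cells over `[0,1]^d`: the root is `[0,1]^d` and each cell is
bisected at the midpoint of one of its longest edges. -/
def IsMaxEdgeTree (d : ℕ) (t : List Bool → Cell d) : Prop :=
  t [] = (fun _ => ((0:ℝ), (1:ℝ))) ∧
  ∀ s : List Bool, ∃ j : Fin d,
    (∀ k, (t s k).2 - (t s k).1 ≤ (t s j).2 - (t s j).1) ∧
    t (s ++ [false]) = Function.update (t s) j ((t s j).1, ((t s j).1 + (t s j).2) / 2) ∧
    t (s ++ [true]) = Function.update (t s) j (((t s j).1 + (t s j).2) / 2, (t s j).2)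

/-- The axis-parallel rectangle in Euclidean space determined by a cell. -/
def cellSetE {d : ℕ} (c : Cell d) : Set (EuclideanSpace ℝ (Fin d)) :=
  {x | ∀ k, x k ∈ Set.Icc (c k).1 (c k).2}

/-!
Bisecting along a longest edge halves a side of length `2^{-m}` with `m` minimal, so the sides of
a depth-`i` cell are `2^{-f k}` with exponents summing to `i` and pairwise differing by at most one.
Such exponents lie strictly within distance one of their mean `i/d`, hence between `⌊i/d⌋` and
`⌈i/d⌉`; and a box whose sides all lie in `[a, b]` has diameter between `√d a` and `√d b`.
-/

lemma abs_sub_sum_div_card_lt_one {ι : Type*} [Fintype ι] {f : ι → ℝ}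
    (hf : ∀ k k', f k ≤ f k' + 1) (k : ι) :
    |f k - (∑ k', f k') / Fintype.card ι| < 1 := by
  have hcard : (0:ℝ) < Fintype.card ι := by exact_mod_cast Fintype.card_pos_iff.mpr ⟨k⟩
  -- both sums have nonnegative terms and their `k`-th term is `1`
  have hbelow : 1 ≤ ∑ k', (f k' - f k + 1) :=
    (le_of_eq (by ring)).trans <| Finset.single_le_sum (f := fun k' => f k' - f k + 1)
      (fun k' _ => by linarith [hf k k']) (Finset.mem_univ k)
  have habove : 1 ≤ ∑ k', (f k - f k' + 1) :=
    (le_of_eq (by ring)).trans <| Finset.single_le_sum (f := fun k' => f k - f k' + 1)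
      (fun k' _ => by linarith [hf k' k]) (Finset.mem_univ k)
  simp only [Finset.sum_add_distrib, Finset.sum_sub_distrib, Finset.sum_const, Finset.card_univ,
    nsmul_eq_mul, mul_one] at hbelow habove
  have hlower : f k - 1 < (∑ k', f k') / Fintype.card ι := by rw [lt_div_iff₀ hcard]; linarith
  have hupper : (∑ k', f k') / Fintype.card ι < f k + 1 := by rw [div_lt_iff₀ hcard]; linarith
  rw [abs_sub_lt_iff]
  constructor <;> linarith

def IsBalanced {ι : Type*} (f : ι → ℕ) : Prop := ∀ k k', f k ≤ f k' + 1

lemma IsBalanced.floor_le_and_le_ceil {ι : Type*} [Fintype ι] {f : ι → ℕ} (hf : IsBalanced f)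
    (k : ι) :
    ⌊((∑ k', f k' : ℕ) : ℝ) / Fintype.card ι⌋ ≤ f k ∧
      (f k : ℤ) ≤ ⌈((∑ k', f k' : ℕ) : ℝ) / Fintype.card ι⌉ := by
  have h := abs_sub_sum_div_card_lt_one (f := fun k => (f k : ℝ))
    (fun k k' => by exact_mod_cast hf k k') k
  rw [abs_sub_lt_iff] at h
  rw [Int.floor_le_iff, Int.le_ceil_iff]
  push_cast at h ⊢
  constructor <;> linarith

lemma IsBalanced.update_add_one {ι : Type*} [DecidableEq ι] {f : ι → ℕ} (hf : IsBalanced f)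
    {j : ι} (hj : ∀ k, f j ≤ f k) : IsBalanced (Function.update f j (f j + 1)) := by
  intro k k'
  simp only [Function.update_apply]
  split_ifs
  · omega
  · linarith [hj k']
  · linarith [hf k j]
  · exact hf k k'

def sideLength {d : ℕ} (c : Cell d) (k : Fin d) : ℝ := (c k).2 - (c k).1

lemma IsMaxEdgeTree.sideLength_append_singleton {d : ℕ} {t : List Bool → Cell d}
    (ht : IsMaxEdgeTree d t) (s : List Bool) :
    ∃ j, (∀ k, sideLength (t s) k ≤ sideLength (t s) j) ∧ ∀ b : Bool,
      sideLength (t (s ++ [b])) =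
        Function.update (sideLength (t s)) j (sideLength (t s) j / 2) := by
  obtain ⟨j, hmax, hfalse, htrue⟩ := ht.2 s
  refine ⟨j, hmax, fun b => funext fun k => ?_⟩
  by_cases hk : k = j
  · subst hk
    cases b <;> simp only [hfalse, htrue, sideLength, Function.update_self] <;> ring
  · cases b <;> simp [hfalse, htrue, sideLength, hk]

lemma IsMaxEdgeTree.exists_isBalanced_sideLength_eq {d : ℕ} {t : List Bool → Cell d}
    (ht : IsMaxEdgeTree d t) (s : List Bool) :
    ∃ f : Fin d → ℕ, IsBalanced f ∧ ∑ k, f k = s.length ∧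
      ∀ k, sideLength (t s) k = (2:ℝ) ^ (-(f k : ℤ)) := by
  induction s using List.reverseRecOn with
  | nil => exact ⟨0, fun _ _ => by simp, by simp, fun k => by simp [sideLength, ht.1]⟩
  | append_singleton s b ih =>
    obtain ⟨f, hbal, hsum, hside⟩ := ih
    obtain ⟨j, hmax, hchild⟩ := ht.sideLength_append_singleton s
    have hmin : ∀ k, f j ≤ f k := fun k => by
      have h := hmax k
      rw [hside, hside, zpow_le_zpow_iff_right₀ one_lt_two] at h
      omega
    refine ⟨Function.update f j (f j + 1), hbal.update_add_one hmin, ?_, fun k => ?_⟩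
    · rw [Finset.sum_update_of_mem (Finset.mem_univ j), List.length_append, ← hsum,
        Finset.sum_eq_sum_sdiff_singleton_add (Finset.mem_univ j)]
      simp only [List.length_singleton]
      ring
    · rw [hchild b]
      by_cases hk : k = j
      · subst hk
        simp only [Function.update_self, hside]
        push_cast
        rw [neg_add', zpow_sub_one₀ two_ne_zero, div_eq_mul_inv]
      · simp [hk, hside]

lemma EuclideanSpace.dist_le_sqrt_card_mul {ι : Type*} [Fintype ι] {x y : EuclideanSpace ℝ ι}
    {r : ℝ} (hr : 0 ≤ r) (h : ∀ k, dist (x k) (y k) ≤ r) :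
    dist x y ≤ √(Fintype.card ι) * r := by
  rw [EuclideanSpace.dist_eq, ← Real.sqrt_sq hr, ← Real.sqrt_mul (Nat.cast_nonneg _)]
  refine Real.sqrt_le_sqrt ?_
  calc ∑ k, dist (x k) (y k) ^ 2 ≤ ∑ _k : ι, r ^ 2 :=
        Finset.sum_le_sum fun k _ => pow_le_pow_left₀ dist_nonneg (h k) 2
    _ = _ := by simp

lemma EuclideanSpace.sqrt_card_mul_le_dist {ι : Type*} [Fintype ι] {x y : EuclideanSpace ℝ ι}
    {r : ℝ} (hr : 0 ≤ r) (h : ∀ k, r ≤ dist (x k) (y k)) :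
    √(Fintype.card ι) * r ≤ dist x y := by
  rw [EuclideanSpace.dist_eq, ← Real.sqrt_sq hr, ← Real.sqrt_mul (Nat.cast_nonneg _)]
  refine Real.sqrt_le_sqrt ?_
  calc (Fintype.card ι : ℝ) * r ^ 2 = ∑ _k : ι, r ^ 2 := by simp
    _ ≤ ∑ k, dist (x k) (y k) ^ 2 := Finset.sum_le_sum fun k _ => pow_le_pow_left₀ hr (h k) 2

lemma isCompact_cellSetE {d : ℕ} (c : Cell d) : IsCompact (cellSetE c) := by
  have h : cellSetE c =
      EuclideanSpace.equiv (Fin d) ℝ ⁻¹' Set.Icc (fun k => (c k).1) (fun k => (c k).2) := by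
    ext x
    simp [cellSetE, Pi.le_def, forall_and]
  rw [h]
  exact (EuclideanSpace.equiv (Fin d) ℝ).toHomeomorph.isCompact_preimage.2 isCompact_Icc

lemma diam_cellSetE_le {d : ℕ} {c : Cell d} {r : ℝ} (hr : 0 ≤ r)
    (h : ∀ k, sideLength c k ≤ r) : Metric.diam (cellSetE c) ≤ √d * r :=
  Metric.diam_le_of_forall_dist_le (by positivity) fun x hx y hy => by
    simpa using EuclideanSpace.dist_le_sqrt_card_mul hr fun k =>
      (Real.dist_le_of_mem_Icc (hx k) (hy k)).trans (h k)

lemma le_diam_cellSetE {d : ℕ} {c : Cell d} {r : ℝ} (hr : 0 ≤ r)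
    (h : ∀ k, r ≤ sideLength c k) : √d * r ≤ Metric.diam (cellSetE c) := by
  have hside : ∀ k, (c k).1 ≤ (c k).2 := fun k => sub_nonneg.1 (hr.trans (h k))
  let lower : EuclideanSpace ℝ (Fin d) := WithLp.toLp 2 fun k => (c k).1
  let upper : EuclideanSpace ℝ (Fin d) := WithLp.toLp 2 fun k => (c k).2
  have hlower : lower ∈ cellSetE c := fun k => ⟨le_rfl, hside k⟩
  have hupper : upper ∈ cellSetE c := fun k => ⟨hside k, le_rfl⟩
  calc √d * r ≤ dist lower upper := by
        simpa using EuclideanSpace.sqrt_card_mul_le_dist (x := lower) (y := upper) hr fun k => by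
          show r ≤ dist (c k).1 (c k).2
          rw [Real.dist_eq, abs_sub_comm, abs_of_nonneg (sub_nonneg.2 (hside k))]
          exact h k
    _ ≤ Metric.diam (cellSetE c) :=
        Metric.dist_le_diam_of_mem (isCompact_cellSetE c).isBounded hlower hupper

lemma inv_mul_rpow_neg_le_zpow_neg_ceil {b : ℝ} (hb : 1 ≤ b) (x : ℝ) :
    b⁻¹ * b ^ (-x) ≤ b ^ (-⌈x⌉) := by
  rw [inv_mul_eq_div, ← Real.rpow_sub_one (by positivity), ← Real.rpow_intCast]
  apply Real.rpow_le_rpow_of_exponent_le hb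
  push_cast
  linarith [Int.ceil_lt_add_one x]

lemma zpow_neg_floor_le_mul_rpow_neg {b : ℝ} (hb : 1 ≤ b) (x : ℝ) :
    b ^ (-⌊x⌋) ≤ b * b ^ (-x) := by
  rw [mul_comm, ← Real.rpow_add_one (by positivity), ← Real.rpow_intCast]
  apply Real.rpow_le_rpow_of_exponent_le hb
  push_cast
  linarith [Int.sub_one_lt_floor x]

theorem stmt_9_general (d : ℕ) (t : List Bool → Cell d) (ht : IsMaxEdgeTree d t)
    (i : ℕ) (s : List Bool) (hs : s.length = i) :
    (∀ k, (2:ℝ) ^ (-⌈(i:ℝ)/(d:ℝ)⌉) ≤ (t s k).2 - (t s k).1 ∧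
      (t s k).2 - (t s k).1 ≤ (2:ℝ) ^ (-⌊(i:ℝ)/(d:ℝ)⌋))
    ∧ 2⁻¹ * Real.sqrt d * (2:ℝ) ^ (-(i:ℝ)/d) ≤ Metric.diam (cellSetE (t s))
    ∧ Metric.diam (cellSetE (t s)) ≤ 2 * Real.sqrt d * (2:ℝ) ^ (-(i:ℝ)/d) := by
  obtain ⟨f, hbal, hsum, hside⟩ := ht.exists_isBalanced_sideLength_eq s
  have hsides : ∀ k, (2:ℝ) ^ (-⌈(i:ℝ)/d⌉) ≤ sideLength (t s) k ∧
      sideLength (t s) k ≤ (2:ℝ) ^ (-⌊(i:ℝ)/d⌋) := by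
    intro k
    obtain ⟨hfloor, hceil⟩ := hbal.floor_le_and_le_ceil k
    rw [hsum, hs, Fintype.card_fin] at hfloor hceil
    rw [hside k]
    exact ⟨zpow_le_zpow_right₀ one_le_two (neg_le_neg hceil),
      zpow_le_zpow_right₀ one_le_two (neg_le_neg hfloor)⟩
  refine ⟨hsides, ?_, ?_⟩
  · calc 2⁻¹ * √d * (2:ℝ) ^ (-(i:ℝ)/d) = √d * (2⁻¹ * 2 ^ (-((i:ℝ)/d))) := by
          rw [neg_div]; ring
      _ ≤ √d * 2 ^ (-⌈(i:ℝ)/d⌉) := by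
          gcongr; exact inv_mul_rpow_neg_le_zpow_neg_ceil one_le_two _
      _ ≤ _ := le_diam_cellSetE (by positivity) fun k => (hsides k).1
  · calc Metric.diam (cellSetE (t s)) ≤ √d * 2 ^ (-⌊(i:ℝ)/d⌋) :=
          diam_cellSetE_le (by positivity) fun k => (hsides k).2
      _ ≤ √d * (2 * 2 ^ (-((i:ℝ)/d))) := by
          gcongr; exact zpow_neg_floor_le_mul_rpow_neg one_le_two _
      _ = 2 * √d * (2:ℝ) ^ (-(i:ℝ)/d) := by rw [neg_div]; ring

/-- Every depth-`i` cell of a max-edge partition of `[0,1]^d` has side lengths in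
`[2^{-⌈i/d⌉}, 2^{-⌊i/d⌋}]`, hence Euclidean diameter between `√d·2^{-i/d}/2` and
`2√d·2^{-i/d}`. -/
theorem stmt_9 (d : ℕ) (hd : 0 < d) (t : List Bool → Cell d) (ht : IsMaxEdgeTree d t)
    (i : ℕ) (s : List Bool) (hs : s.length = i) :
    (∀ k, (2:ℝ) ^ (-⌈(i:ℝ)/(d:ℝ)⌉) ≤ (t s k).2 - (t s k).1 ∧
      (t s k).2 - (t s k).1 ≤ (2:ℝ) ^ (-⌊(i:ℝ)/(d:ℝ)⌋))
    ∧ 2⁻¹ * Real.sqrt d * (2:ℝ) ^ (-(i:ℝ)/d) ≤ Metric.diam (cellSetE (t s))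
    ∧ Metric.diam (cellSetE (t s)) ≤ 2 * Real.sqrt d * (2:ℝ) ^ (-(i:ℝ)/d) :=
  stmt_9_general d t ht i s hs
end

section
/- Let A, B > 0 and a, b ∈ ℝ. (i) If a ≥ 0 and b ≥ 0 and (a,b) ≠ (0,0), then sup over w ∈ [0,1] of (w·a + (1−w)·b)²/(w²·A + (1−w)²·B) equals a²/A + b²/B; when a > 0 and b > 0 the supremum is attained at w = (B/b)/(A/a + B/b) ∈ (0,1). (ii) If a·b < 0, then sup over w ∈ [0,1] of (w·a + (1−w)·b)²/(w²·A + (1−w)²·B) equals max(a²/A, b²/B), attained at an endpoint w ∈ {0,1}. -/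
/-!
By Cauchy–Schwarz, `(w a + (1 - w) b)² ≤ (w² A + (1 - w)² B) (a² / A + b² / B)` for every `w`,
with equality when `w A / a = (1 - w) B / b`; for `a, b > 0` this balance point lies in `(0, 1)`.
When `a b ≤ 0` and `w ∈ [0, 1]` the cross term `2 w (1 - w) a b` is non-positive, so the ratio is
at most the mediant of `a² / A` and `b² / B`, hence at most their maximum, which is the value
at `w = 1` or `w = 0`.
-/

open Set

noncomputable def mixRatio (A B a b w : ℝ) : ℝ :=
  (w * a + (1 - w) * b) ^ 2 / (w ^ 2 * A + (1 - w) ^ 2 * B)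

lemma isGreatest_image_of_apply_eq {α β : Type*} [Preorder β] {f : α → β} {s : Set α} {x : α}
    {M : β} (hx : x ∈ s) (hfx : f x = M) (hle : ∀ y ∈ s, f y ≤ M) : IsGreatest (f '' s) M :=
  ⟨⟨x, hx, hfx⟩, by rintro _ ⟨y, hy, rfl⟩; exact hle y hy⟩

section mixRatio

variable {A B a b : ℝ}

@[simp] lemma mixRatio_zero : mixRatio A B a b 0 = b ^ 2 / B := by simp [mixRatio]

@[simp] lemma mixRatio_one : mixRatio A B a b 1 = a ^ 2 / A := by simp [mixRatio]

lemma mixRatio_denom_pos (hA : 0 < A) (hB : 0 < B) (w : ℝ) :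
    0 < w ^ 2 * A + (1 - w) ^ 2 * B := by
  rcases eq_or_ne w 0 with rfl | hw
  · simpa using hB
  · positivity

lemma mixRatio_le_add (hA : 0 < A) (hB : 0 < B) (w : ℝ) :
    mixRatio A B a b w ≤ a ^ 2 / A + b ^ 2 / B := by
  rw [mixRatio, div_le_iff₀ (mixRatio_denom_pos hA hB w), div_add_div _ _ hA.ne' hB.ne',
    div_mul_eq_mul_div, le_div_iff₀ (mul_pos hA hB)]
  nlinarith [sq_nonneg (w * A * b - (1 - w) * B * a)]

lemma mixRatio_balance_mem_Ioo (hA : 0 < A) (hB : 0 < B) (ha : 0 < a) (hb : 0 < b) :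
    (B / b) / (A / a + B / b) ∈ Ioo (0 : ℝ) 1 :=
  ⟨by positivity, (div_lt_one (by positivity)).2 (lt_add_of_pos_left _ (by positivity))⟩

lemma mixRatio_balance_eq (hA : 0 < A) (hB : 0 < B) (ha : 0 < a) (hb : 0 < b) :
    mixRatio A B a b ((B / b) / (A / a + B / b)) = a ^ 2 / A + b ^ 2 / B := by
  have hw : (B / b) / (A / a + B / b) = a * B / (A * b + a * B) := by field_simp
  have hne : (a * B) ^ 2 * A + (A * b) ^ 2 * B ≠ 0 := by positivity
  rw [mixRatio, hw, one_sub_div (by positivity), add_sub_cancel_right]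
  field_simp

lemma mixRatio_le_max (hA : 0 < A) (hB : 0 < B) (hab : a * b ≤ 0) {w : ℝ}
    (hw : w ∈ Icc (0 : ℝ) 1) : mixRatio A B a b w ≤ max (a ^ 2 / A) (b ^ 2 / B) := by
  set M := max (a ^ 2 / A) (b ^ 2 / B)
  have haM : a ^ 2 ≤ M * A := (div_le_iff₀ hA).1 (le_max_left _ _)
  have hbM : b ^ 2 ≤ M * B := (div_le_iff₀ hB).1 (le_max_right _ _)
  have hcross : w * (1 - w) * (a * b) ≤ 0 :=
    mul_nonpos_of_nonneg_of_nonpos (mul_nonneg hw.1 (sub_nonneg.2 hw.2)) hab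
  rw [mixRatio, div_le_iff₀ (mixRatio_denom_pos hA hB w)]
  calc (w * a + (1 - w) * b) ^ 2
      = w ^ 2 * a ^ 2 + (1 - w) ^ 2 * b ^ 2 + 2 * (w * (1 - w)) * (a * b) := by ring
    _ ≤ w ^ 2 * (M * A) + (1 - w) ^ 2 * (M * B) := by
      linarith [mul_le_mul_of_nonneg_left haM (sq_nonneg w),
        mul_le_mul_of_nonneg_left hbM (sq_nonneg (1 - w))]
    _ = M * (w ^ 2 * A + (1 - w) ^ 2 * B) := by ring

lemma exists_mem_zero_one_mixRatio_eq_max :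
    ∃ w ∈ ({0, 1} : Set ℝ), mixRatio A B a b w = max (a ^ 2 / A) (b ^ 2 / B) := by
  rcases le_total (a ^ 2 / A) (b ^ 2 / B) with h | h
  · exact ⟨0, by simp, by simp [max_eq_right h]⟩
  · exact ⟨1, by simp, by simp [max_eq_left h]⟩

end mixRatio

/-- Closed-form solution of the weight-optimization problem used to select the
public/private mixing ratio in the pruning procedure. -/
theorem stmt_16 (A B : ℝ) (hA : 0 < A) (hB : 0 < B) (a b : ℝ) :
    (0 ≤ a → 0 ≤ b → ¬(a = 0 ∧ b = 0) →
      IsGreatest ((fun w : ℝ => (w * a + (1 - w) * b) ^ 2 / (w ^ 2 * A + (1 - w) ^ 2 * B)) ''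
          Icc (0 : ℝ) 1) (a ^ 2 / A + b ^ 2 / B)
      ∧ (0 < a → 0 < b →
          (B / b) / (A / a + B / b) ∈ Ioo (0 : ℝ) 1 ∧
          (fun w : ℝ => (w * a + (1 - w) * b) ^ 2 / (w ^ 2 * A + (1 - w) ^ 2 * B))
            ((B / b) / (A / a + B / b)) = a ^ 2 / A + b ^ 2 / B))
    ∧ (a * b < 0 →
        IsGreatest ((fun w : ℝ => (w * a + (1 - w) * b) ^ 2 / (w ^ 2 * A + (1 - w) ^ 2 * B)) ''
            Icc (0 : ℝ) 1) (max (a ^ 2 / A) (b ^ 2 / B))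
        ∧ ∃ w ∈ ({0, 1} : Set ℝ),
            (w * a + (1 - w) * b) ^ 2 / (w ^ 2 * A + (1 - w) ^ 2 * B)
              = max (a ^ 2 / A) (b ^ 2 / B)) := by
  refine ⟨fun ha hb _ => ⟨?_, fun ha' hb' =>
    ⟨mixRatio_balance_mem_Ioo hA hB ha' hb', mixRatio_balance_eq hA hB ha' hb'⟩⟩, fun hab => ?_⟩
  · obtain ⟨w, hw, hmax⟩ : ∃ w ∈ Icc (0 : ℝ) 1, mixRatio A B a b w = a ^ 2 / A + b ^ 2 / B := by
      rcases ha.eq_or_lt with rfl | ha'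
      · exact ⟨0, by simp, by simp⟩
      rcases hb.eq_or_lt with rfl | hb'
      · exact ⟨1, by simp, by simp⟩
      exact ⟨_, Ioo_subset_Icc_self (mixRatio_balance_mem_Ioo hA hB ha' hb'),
        mixRatio_balance_eq hA hB ha' hb'⟩
    exact isGreatest_image_of_apply_eq hw hmax fun y _ => mixRatio_le_add hA hB y
  · obtain ⟨w, hw, hmax⟩ := exists_mem_zero_one_mixRatio_eq_max (A := A) (B := B) (a := a) (b := b)
    refine ⟨?_, w, hw, hmax⟩
    have hw' : w ∈ Icc (0 : ℝ) 1 := by rcases hw with rfl | rfl <;> simp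
    exact isGreatest_image_of_apply_eq hw' hmax fun y hy => mixRatio_le_max hA hB hab.le hy
end
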